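/- Let g(x) := Σ_{n≥0} binom(2n,n)·x^n/2^n (the formal series (1 − 2x)^{−1/2}) and f(x) := Σ_{n≥1} 2^{n−1}·x^n/n (the formal series −(1/2)·log(1 − 2x)), and let S(n,m) := n!·[x^n]( g(x)·f(x)^m / m! ) be the entries of the generalized signless Stirling1 Sheffer triangle (OEIS A028338). Then in ℚ[[t]] one has Σ_{m≥0} S(m+1, m)·t^m = (1 + t)/(1 − t)^3; equivalently, S(m+1, m) = (m+1)^2 for all m ≥ 0. -/

import Mathlib

/-!
Since `f = x·h` with `h(0) = 1`, the coefficient `[x^(m+1)] g·f^m` is the linear coefficient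
`[x] g·h^m = g₁ + m·h₁`, which is `m + 1` here; hence `S(m+1, m) = (m+1)!·(m+1)/m! = (m+1)²`.
The o.g.f. follows from `(m+1)² = C(m+2, 2) + C(m+1, 2)` and `Σ C(m+2, 2) t^m = (1 - t)⁻³`.
-/

open PowerSeries

/-- The formal power series `(1 − 2x)^{−1/2} = Σ_n binom(2n,n)·x^n/2^n` over `ℚ`. -/
noncomputable def gA028338 : ℚ⟦X⟧ :=
  PowerSeries.mk fun n => ((2 * n).choose n : ℚ) / 2 ^ n

/-- The formal power series `−(1/2)·log(1 − 2x) = Σ_{n≥1} 2^{n−1}·x^n/n` over `ℚ`. -/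
noncomputable def fA028338 : ℚ⟦X⟧ :=
  PowerSeries.mk fun n => if n = 0 then 0 else (2 : ℚ) ^ (n - 1) / n

/-- The entries of the generalized signless Stirling1 Sheffer triangle A028338,
`((1 − 2s)^{−1/2}, −(1/2)log(1 − 2s))`: `S(n,m) = n!·[x^n](g(x)·f(x)^m / m!)`. -/
noncomputable def A028338 (n m : ℕ) : ℚ :=
  (n.factorial : ℚ) * coeff n (gA028338 * fA028338 ^ m) / m.factorial

theorem Nat.succ_sq_eq_choose_two_add_choose_two (n : ℕ) :
    (n + 1) ^ 2 = (n + 2).choose 2 + (n + 1).choose 2 := by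
  induction n with
  | zero => rfl
  | succ k ih =>
    have h₁ := Nat.choose_succ_succ' (k + 2) 1
    have h₂ := Nat.choose_succ_succ' (k + 1) 1
    simp only [Nat.choose_one_right, Nat.reduceAdd] at h₁ h₂ ⊢
    nlinarith [ih]

namespace PowerSeries

variable {R : Type*} [CommRing R]

theorem mk_succ_sq_eq_one_add_X_mul :
    (mk fun n => ((n : R) + 1) ^ 2) = (1 + X) * mk fun n => ((2 + n).choose 2 : R) := by
  ext (_ | n)
  · simp
  · rw [add_mul, one_mul, map_add, coeff_succ_X_mul, coeff_mk, coeff_mk, coeff_mk,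
      add_comm 2, add_comm 2]
    norm_cast
    exact congrArg Nat.cast (Nat.succ_sq_eq_choose_two_add_choose_two (n + 1))

theorem one_sub_X_pow_three_mul_mk_succ_sq :
    (1 - X : R⟦X⟧) ^ 3 * (mk fun n => ((n : R) + 1) ^ 2) = 1 + X := by
  rw [mk_succ_sq_eq_one_add_X_mul, mul_left_comm, mul_comm _ (mk _),
    mk_add_choose_mul_one_sub_pow_eq_one, mul_one]

theorem coeff_succ_mul_X_mul_pow {g h : R⟦X⟧} (hg : constantCoeff g = 1)
    (hh : constantCoeff h = 1) (m : ℕ) :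
    coeff (m + 1) (g * (X * h) ^ m) = coeff 1 g + m * coeff 1 h := by
  rw [mul_pow, mul_left_comm, add_comm, coeff_X_pow_mul, coeff_one_mul, coeff_one_pow,
    map_pow, hg, hh]
  ring

end PowerSeries

theorem fA028338_eq_X_mul : fA028338 = X * mk fun n => (2 : ℚ) ^ n / (n + 1) := by
  ext (_ | n)
  · simp [fA028338]
  · simp [fA028338, coeff_succ_X_mul]

theorem A028338_succ_self (m : ℕ) : A028338 (m + 1) m = ((m : ℚ) + 1) ^ 2 := by
  have hg : constantCoeff gA028338 = 1 := by
    simp [gA028338, ← coeff_zero_eq_constantCoeff_apply]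
  have hh : constantCoeff (mk fun n => (2 : ℚ) ^ n / (n + 1)) = 1 := by
    simp [← coeff_zero_eq_constantCoeff_apply]
  rw [A028338, fA028338_eq_X_mul, coeff_succ_mul_X_mul_pow hg hh]
  norm_num [gA028338, Nat.factorial_succ]
  field_simp
  ring

/-- The o.g.f. of the second (`d = 1`) diagonal of the triangle A028338:
`Σ_m S(m+1,m)·t^m = (1 + t)/(1 − t)^3`, equivalently `S(m+1,m) = (m+1)^2` for all
`m ≥ 0` (the squares, A000290). -/
theorem A028338_diagonal_one_ogf :
    (1 - PowerSeries.X : ℚ⟦X⟧) ^ 3 * PowerSeries.mk (fun m => A028338 (m + 1) m)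
        = 1 + PowerSeries.X
      ∧ ∀ m : ℕ, A028338 (m + 1) m = ((m : ℚ) + 1) ^ 2 := by
  refine ⟨?_, A028338_succ_self⟩
  simp only [A028338_succ_self]
  exact one_sub_X_pow_three_mul_mk_succ_sq
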